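/- arXiv:1604.04980 — 5 statements merged into one kernel-verified Lean document; each statement's English description precedes it below -/
import Mathlib

section
/- Let δ > 0, suppose K_j is positive definite with minimum eigenvalue λ_min, and suppose φ(d_min(x_{j+1}))² ≤ δ / ((1 + √j · ‖K_j⁻¹ k_j(x)‖₂)² + j δ / λ_min) (equivalently, since φ is strictly decreasing, d_min(x_{j+1}) ≥ φ⁻¹(√(δ / ((1 + √j ‖K_j⁻¹ k_j(x)‖₂)² + j δ / λ_min)))). Then the scaled reduction in variance satisfies R(x_{j+1}) ≤ δ; moreover its denominator Φ(x_{j+1},x_{j+1}) − k_j(x_{j+1})ᵀ K_j⁻¹ k_j(x_{j+1}) is strictly positive under this condition. -/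
open Matrix

/-- Euclidean (ℓ2) norm of a vector in ℝ^n. -/
noncomputable def enormL2 {n : ℕ} (v : Fin n → ℝ) : ℝ := Real.sqrt (v ⬝ᵥ v)

lemma dot_self_nonneg' {n : ℕ} (v : Fin n → ℝ) : 0 ≤ v ⬝ᵥ v :=
  Finset.sum_nonneg fun i _ => mul_self_nonneg (v i)

lemma rayleigh_lower {n : ℕ} {A : Matrix (Fin n) (Fin n) ℝ} (hA : A.IsHermitian)
    (lam : ℝ) (hlam : ∀ i, lam ≤ hA.eigenvalues i) (w : Fin n → ℝ) :
    lam * (w ⬝ᵥ w) ≤ w ⬝ᵥ (A *ᵥ w) := by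
  classical
  set U : Matrix (Fin n) (Fin n) ℝ := (hA.eigenvectorUnitary : Matrix (Fin n) (Fin n) ℝ) with hUdef
  have hU2 : star U * U = 1 := by rw [hUdef]; exact_mod_cast Unitary.coe_star_mul_self hA.eigenvectorUnitary
  have hU1 : U * star U = 1 := by rw [hUdef]; exact_mod_cast Unitary.coe_mul_star_self hA.eigenvectorUnitary
  set y : Fin n → ℝ := star U *ᵥ w with hy
  have hdot : ∀ z : Fin n → ℝ, w ⬝ᵥ (U *ᵥ z) = y ⬝ᵥ z := by
    intro z
    rw [hy, Matrix.star_eq_conjTranspose, Matrix.conjTranspose_eq_transpose_of_trivial,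
      Matrix.mulVec_transpose, dotProduct_mulVec]
  have hww : w ⬝ᵥ w = y ⬝ᵥ y := by
    have : U *ᵥ y = w := by
      rw [hy, Matrix.mulVec_mulVec, hU1, Matrix.one_mulVec]
    calc w ⬝ᵥ w = w ⬝ᵥ (U *ᵥ y) := by rw [this]
    _ = y ⬝ᵥ y := hdot y
  have hdiag : Matrix.diagonal (RCLike.ofReal ∘ hA.eigenvalues) = Matrix.diagonal hA.eigenvalues := by
    ext i k
    by_cases h : i = k <;> simp [Matrix.diagonal_apply, h]
  have hAw : A *ᵥ w = U *ᵥ (Matrix.diagonal hA.eigenvalues *ᵥ y) := by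
    conv_lhs => rw [hA.spectral_theorem]
    simp only [Unitary.conjStarAlgAut_apply, hdiag]
    rw [← hUdef, Matrix.mulVec_mulVec, Matrix.mulVec_mulVec, mul_assoc]
  have hquad : w ⬝ᵥ (A *ᵥ w) = ∑ i, hA.eigenvalues i * (y i * y i) := by
    rw [hAw, hdot]
    simp [dotProduct, Matrix.mulVec_diagonal]
    ring_nf
    apply Finset.sum_congr rfl
    intro i _
    ring
  rw [hquad, hww]
  rw [dotProduct, Finset.mul_sum]
  exact Finset.sum_le_sum fun i _ =>
    mul_le_mul_of_nonneg_right (hlam i) (mul_self_nonneg (y i))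

lemma quad_inv_le {n : ℕ} {A : Matrix (Fin n) (Fin n) ℝ} (hA : A.PosDef)
    (lam : ℝ) (hlampos : 0 < lam)
    (hlam : ∀ i, lam ≤ hA.isHermitian.eigenvalues i) (v : Fin n → ℝ) :
    v ⬝ᵥ (A⁻¹ *ᵥ v) ≤ (v ⬝ᵥ v) / lam := by
  set w := A⁻¹ *ᵥ v with hw
  have hAw : A *ᵥ w = v := by
    rw [hw, Matrix.mulVec_mulVec,
      Matrix.mul_nonsing_inv _ (isUnit_iff_ne_zero.mpr hA.det_pos.ne'), Matrix.one_mulVec]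
  have hr : lam * (w ⬝ᵥ w) ≤ w ⬝ᵥ v := by
    have := rayleigh_lower hA.isHermitian lam hlam w
    rwa [hAw] at this
  have hcs : (w ⬝ᵥ v) ^ 2 ≤ (w ⬝ᵥ w) * (v ⬝ᵥ v) := by
    simpa [dotProduct, sq] using Finset.sum_mul_sq_le_sq_mul_sq Finset.univ w v
  have ht : 0 ≤ w ⬝ᵥ w := dot_self_nonneg' w
  have hs : 0 ≤ v ⬝ᵥ v := dot_self_nonneg' v
  have hcomm : v ⬝ᵥ w = w ⬝ᵥ v := dotProduct_comm v w
  have hp : 0 ≤ w ⬝ᵥ v := le_trans (mul_nonneg hlampos.le ht) hr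
  rw [hcomm, le_div_iff₀ hlampos]
  nlinarith [hp, hr, hcs, hs, mul_le_mul_of_nonneg_left hcs hlampos.le,
    mul_le_mul_of_nonneg_right hr hs]

set_option maxHeartbeats 1000000 in
/-- **Theorem 1 (maximum distance bound).** For a radial kernel
`Φ(u,v) = φ(‖Θ(u−v)‖₂)` with `φ` strictly decreasing, nonnegative, `φ(0) = 1`,
if `φ(d_min(x_{j+1}))² ≤ δ / ((1 + √j ‖K_j⁻¹ k_j(x)‖₂)² + jδ/λ_min)` then the
Schur-complement denominator is strictly positive and `R(x_{j+1}) ≤ δ`. -/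
theorem max_distance_variance_reduction_bound (d j : ℕ)
    (Θ : Matrix (Fin d) (Fin d) ℝ) (φ : ℝ → ℝ)
    (hφanti : StrictAntiOn φ (Set.Ici 0))
    (hφnonneg : ∀ t, 0 ≤ t → 0 ≤ φ t)
    (hφ0 : φ 0 = 1)
    (Φ : (Fin d → ℝ) → (Fin d → ℝ) → ℝ)
    (hΦ : ∀ u v, Φ u v = φ (enormL2 (Θ *ᵥ (u - v))))
    (x : Fin d → ℝ) (xs : Fin j → (Fin d → ℝ)) (xnew : Fin d → ℝ)
    (Kj : Matrix (Fin j) (Fin j) ℝ)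
    (hKj : Kj = Matrix.of fun i k => Φ (xs i) (xs k))
    (hKpd : Kj.PosDef)
    (kj : (Fin d → ℝ) → Fin j → ℝ)
    (hkj : ∀ u, kj u = fun i => Φ (xs i) u)
    (lammin : ℝ)
    (hlam : IsLeast (Set.range hKpd.isHermitian.eigenvalues) lammin)
    (dmin : ℝ)
    (hdmin : IsLeast ({enormL2 (Θ *ᵥ (x - xnew))} ∪
      Set.range fun i => enormL2 (Θ *ᵥ (xs i - xnew))) dmin)
    (δ : ℝ) (hδ : 0 < δ)
    (hcond : φ dmin ^ 2 ≤
      δ / ((1 + Real.sqrt (j : ℝ) * enormL2 (Kj⁻¹ *ᵥ kj x)) ^ 2 + (j : ℝ) * δ / lammin)) :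
    0 < Φ xnew xnew - kj xnew ⬝ᵥ Kj⁻¹ *ᵥ kj xnew ∧
      (Φ x xnew - kj xnew ⬝ᵥ Kj⁻¹ *ᵥ kj x) ^ 2 /
        (Φ xnew xnew - kj xnew ⬝ᵥ Kj⁻¹ *ᵥ kj xnew) ≤ δ := by
  classical
  obtain ⟨hmem, hlb⟩ := hlam
  obtain ⟨i0, hi0⟩ := hmem
  have hlampos : 0 < lammin := hi0 ▸ hKpd.eigenvalues_pos i0
  have hlamle : ∀ i, lammin ≤ hKpd.isHermitian.eigenvalues i := fun i => hlb ⟨i, rfl⟩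
  set c := φ dmin with hc
  set a := enormL2 (Kj⁻¹ *ᵥ kj x) with hadef
  have ha0 : 0 ≤ a := Real.sqrt_nonneg _
  have hsj : 0 ≤ Real.sqrt (j : ℝ) := Real.sqrt_nonneg _
  have hdmin0 : 0 ≤ dmin := by
    rcases hdmin.1 with h | ⟨i, h⟩
    · rw [Set.mem_singleton_iff] at h; rw [h]; exact Real.sqrt_nonneg _
    · rw [← h]; exact Real.sqrt_nonneg _
  have hc0 : 0 ≤ c := hφnonneg dmin hdmin0
  set v := kj xnew with hv
  have hent : ∀ i, 0 ≤ v i ∧ v i ≤ c := by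
    intro i
    have hdist : dmin ≤ enormL2 (Θ *ᵥ (xs i - xnew)) :=
      hdmin.2 (Set.mem_union_right _ ⟨i, rfl⟩)
    have h0 : (0 : ℝ) ≤ enormL2 (Θ *ᵥ (xs i - xnew)) := Real.sqrt_nonneg _
    rw [hv, hkj]
    dsimp only
    rw [hΦ]
    exact ⟨hφnonneg _ h0,
      hφanti.antitoneOn (Set.mem_Ici.mpr hdmin0) (Set.mem_Ici.mpr h0) hdist⟩
  have hvx : 0 ≤ Φ x xnew ∧ Φ x xnew ≤ c := by
    have hdist : dmin ≤ enormL2 (Θ *ᵥ (x - xnew)) := hdmin.2 (Set.mem_union_left _ rfl)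
    have h0 : (0 : ℝ) ≤ enormL2 (Θ *ᵥ (x - xnew)) := Real.sqrt_nonneg _
    rw [hΦ]
    exact ⟨hφnonneg _ h0,
      hφanti.antitoneOn (Set.mem_Ici.mpr hdmin0) (Set.mem_Ici.mpr h0) hdist⟩
  have hvv : v ⬝ᵥ v ≤ (j : ℝ) * c ^ 2 := by
    rw [dotProduct]
    calc ∑ i, v i * v i ≤ ∑ _i : Fin j, c * c :=
      Finset.sum_le_sum fun i _ => mul_le_mul (hent i).2 (hent i).2 (hent i).1 hc0
    _ = (j : ℝ) * c ^ 2 := by simp [sq, Finset.sum_const, Finset.card_univ]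
  set u := Kj⁻¹ *ᵥ kj x with hu
  have hau : a ^ 2 = u ⬝ᵥ u := Real.sq_sqrt (dot_self_nonneg' u)
  have hcs2 : (v ⬝ᵥ u) ^ 2 ≤ (v ⬝ᵥ v) * (u ⬝ᵥ u) := by
    simpa [dotProduct, sq] using Finset.sum_mul_sq_le_sq_mul_sq Finset.univ v u
  have hcross : (v ⬝ᵥ u) ^ 2 ≤ (j : ℝ) * c ^ 2 * a ^ 2 := by
    calc (v ⬝ᵥ u) ^ 2 ≤ (v ⬝ᵥ v) * (u ⬝ᵥ u) := hcs2
    _ ≤ ((j : ℝ) * c ^ 2) * (u ⬝ᵥ u) :=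
      mul_le_mul_of_nonneg_right hvv (dot_self_nonneg' u)
    _ = (j : ℝ) * c ^ 2 * a ^ 2 := by rw [hau]
  have hcross' : |v ⬝ᵥ u| ≤ Real.sqrt (j : ℝ) * c * a := by
    have h1 : Real.sqrt ((v ⬝ᵥ u) ^ 2) ≤ Real.sqrt ((j : ℝ) * c ^ 2 * a ^ 2) :=
      Real.sqrt_le_sqrt hcross
    rw [Real.sqrt_sq_eq_abs] at h1
    have h2 : Real.sqrt ((j : ℝ) * c ^ 2 * a ^ 2) = Real.sqrt (j : ℝ) * c * a := by
      rw [Real.sqrt_mul (by positivity), Real.sqrt_mul (Nat.cast_nonneg j),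
        Real.sqrt_sq hc0, Real.sqrt_sq ha0]
    rwa [h2] at h1
  have hnumabs : |Φ x xnew - v ⬝ᵥ u| ≤ c * (1 + Real.sqrt (j : ℝ) * a) := by
    calc |Φ x xnew - v ⬝ᵥ u| ≤ |Φ x xnew| + |v ⬝ᵥ u| := abs_sub _ _
    _ ≤ c + Real.sqrt (j : ℝ) * c * a := by
        rw [abs_of_nonneg hvx.1]
        exact add_le_add hvx.2 hcross'
    _ = c * (1 + Real.sqrt (j : ℝ) * a) := by ring
  have hnumsq : (Φ x xnew - v ⬝ᵥ u) ^ 2 ≤ c ^ 2 * (1 + Real.sqrt (j : ℝ) * a) ^ 2 := by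
    nlinarith [hnumabs, abs_nonneg (Φ x xnew - v ⬝ᵥ u), sq_abs (Φ x xnew - v ⬝ᵥ u)]
  set B := (1 + Real.sqrt (j : ℝ) * a) ^ 2 + (j : ℝ) * δ / lammin with hB
  have hB1 : 1 ≤ (1 + Real.sqrt (j : ℝ) * a) ^ 2 := by nlinarith [mul_nonneg hsj ha0]
  have hBrest : 0 ≤ (j : ℝ) * δ / lammin := by positivity
  have hBpos : 0 < B := by rw [hB]; nlinarith
  have hcond' : c ^ 2 * B ≤ δ := (le_div_iff₀ hBpos).mp hcond
  have hexpand : c ^ 2 * (1 + Real.sqrt (j : ℝ) * a) ^ 2 + c ^ 2 * ((j : ℝ) * δ / lammin) ≤ δ := by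
    rw [hB] at hcond'; nlinarith [hcond']
  have hq : v ⬝ᵥ (Kj⁻¹ *ᵥ v) ≤ (v ⬝ᵥ v) / lammin :=
    quad_inv_le hKpd lammin hlampos hlamle v
  have hq2 : v ⬝ᵥ (Kj⁻¹ *ᵥ v) ≤ (j : ℝ) * c ^ 2 / lammin :=
    hq.trans (div_le_div_of_nonneg_right hvv hlampos.le)
  set q := v ⬝ᵥ (Kj⁻¹ *ᵥ v) with hqdef
  have hΦnew : Φ xnew xnew = 1 := by
    rw [hΦ, sub_self, Matrix.mulVec_zero]
    simpa [enormL2] using hφ0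
  have he2 : δ * ((j : ℝ) * c ^ 2 / lammin) = c ^ 2 * ((j : ℝ) * δ / lammin) := by ring
  have hsqle : c ^ 2 * 1 ≤ c ^ 2 * (1 + Real.sqrt (j : ℝ) * a) ^ 2 :=
    mul_le_mul_of_nonneg_left hB1 (sq_nonneg c)
  have hqlt : q < 1 := by
    rcases eq_or_lt_of_le hc0 with h0 | h0
    · have hz : (j : ℝ) * c ^ 2 / lammin = 0 := by rw [← h0]; ring
      calc q ≤ (j : ℝ) * c ^ 2 / lammin := hq2
      _ = 0 := hz
      _ < 1 := one_pos
    · have hδq : δ * q ≤ δ * ((j : ℝ) * c ^ 2 / lammin) :=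
        mul_le_mul_of_nonneg_left hq2 hδ.le
      have hc2 : 0 < c ^ 2 := by positivity
      -- δ q ≤ c²(jδ/λ) ≤ δ − c²(1+√ja)² ≤ δ − c² < δ
      have : δ * q < δ * 1 := by nlinarith
      exact lt_of_mul_lt_mul_left this hδ.le
  have hden : 0 < Φ xnew xnew - q := by rw [hΦnew]; linarith
  refine ⟨hden, ?_⟩
  rw [div_le_iff₀ hden, hΦnew]
  have hδq : δ * q ≤ δ * ((j : ℝ) * c ^ 2 / lammin) :=
    mul_le_mul_of_nonneg_left hq2 hδ.le
  nlinarith [hnumsq, hexpand, hδq, he2]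
end

section
/- Suppose the kernel has the exact finite-rank form Φ(u,v) = U(u)ᵀU(v), that U_jᵀU_j is invertible, and that C(x) ≠ 0 and C(x_{j+1}) ≠ 0. Then, for any δ ≥ 0, R(x_{j+1}) ≤ δ if and only if cos²(ϑ) ≤ δ / ‖C(x)‖₂², where ϑ is the angle between C(x) and C(x_{j+1}). Consequently, candidate points x_{j+1} whose feature residual C(x_{j+1}) lies outside the double cone {w : cos²(angle between C(x) and w) > δ/‖C(x)‖₂²} cannot reduce the predictive variance by more than σ²δ. -/
open Matrix

/-- Euclidean (ℓ2) norm of a vector in ℝ^n. -/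
noncomputable def enorm {n : ℕ} (v : Fin n → ℝ) : ℝ := Real.sqrt (v ⬝ᵥ v)

/-- **Cone exclusion criterion.** For an exact finite-rank kernel
`Φ(u,v) = U(u)ᵀU(v)` with `UjᵀUj` invertible, `C(x) ≠ 0`, `C(x_{j+1}) ≠ 0`, and
`δ ≥ 0`: `R(x_{j+1}) ≤ δ` iff `cos²(ϑ) ≤ δ/‖C(x)‖₂²`; consequently candidates
outside the cone (i.e. with `cos²(ϑ) ≤ δ/‖C(x)‖₂²`) cannot reduce the predictive
variance by more than `σ²δ`. -/
theorem feature_cone_criterion (d D j : ℕ)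
    (U : (Fin d → ℝ) → Fin D → ℝ)
    (Φ : (Fin d → ℝ) → (Fin d → ℝ) → ℝ)
    (hΦ : ∀ u v, Φ u v = U u ⬝ᵥ U v)
    (x : Fin d → ℝ) (xs : Fin j → (Fin d → ℝ)) (xnew : Fin d → ℝ)
    (Uj : Matrix (Fin D) (Fin j) ℝ)
    (hUj : Uj = Matrix.of fun a i => U (xs i) a)
    (hinv : IsUnit (Ujᵀ * Uj).det)
    (Kj : Matrix (Fin j) (Fin j) ℝ)
    (hKj : Kj = Matrix.of fun i k => Φ (xs i) (xs k))
    (kj : (Fin d → ℝ) → Fin j → ℝ)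
    (hkj : ∀ u, kj u = fun i => Φ (xs i) u)
    (C : (Fin d → ℝ) → Fin D → ℝ)
    (hC : ∀ t, C t = (1 - Uj * (Ujᵀ * Uj)⁻¹ * Ujᵀ) *ᵥ U t)
    (hCx : C x ≠ 0) (hCnew : C xnew ≠ 0)
    (σ2 : ℝ) (hσ2 : 0 < σ2)
    (δ : ℝ) (hδ : 0 ≤ δ) :
    ((Φ x xnew - kj xnew ⬝ᵥ Kj⁻¹ *ᵥ kj x) ^ 2 /
          (Φ xnew xnew - kj xnew ⬝ᵥ Kj⁻¹ *ᵥ kj xnew) ≤ δ ↔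
        (C xnew ⬝ᵥ C x / (_root_.enorm (C xnew) * _root_.enorm (C x))) ^ 2 ≤
          δ / _root_.enorm (C x) ^ 2) ∧
    ((C xnew ⬝ᵥ C x / (_root_.enorm (C xnew) * _root_.enorm (C x))) ^ 2 ≤
          δ / _root_.enorm (C x) ^ 2 →
        σ2 * ((Φ x xnew - kj xnew ⬝ᵥ Kj⁻¹ *ᵥ kj x) ^ 2 /
          (Φ xnew xnew - kj xnew ⬝ᵥ Kj⁻¹ *ᵥ kj xnew)) ≤ σ2 * δ) := by
  -- Matrix algebra setup
  set M := Uj * (Ujᵀ * Uj)⁻¹ * Ujᵀ with hM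
  have hGsymm : (Ujᵀ * Uj)ᵀ = Ujᵀ * Uj := by simp [Matrix.transpose_mul]
  have hMsymm : Mᵀ = M := by
    rw [hM]
    simp [Matrix.transpose_mul, Matrix.transpose_nonsing_inv, hGsymm, Matrix.mul_assoc]
  have hMidem : M * M = M := by
    calc M * M = (Uj * ((Ujᵀ * Uj)⁻¹ * (Ujᵀ * Uj))) * ((Ujᵀ * Uj)⁻¹ * Ujᵀ) := by
          simp only [hM, Matrix.mul_assoc]
      _ = M := by rw [Matrix.nonsing_inv_mul _ hinv, Matrix.mul_one, hM, Matrix.mul_assoc]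
  have h1M : (1 - M)ᵀ * (1 - M) = 1 - M := by
    rw [Matrix.transpose_sub, Matrix.transpose_one, hMsymm]
    noncomm_ring [hMidem]
  have hkj' : ∀ u, kj u = Ujᵀ *ᵥ U u := by
    intro u
    funext i
    simp [hkj, hΦ, hUj, Matrix.mulVec, dotProduct, Matrix.transpose_apply]
  have hKj' : Kj = Ujᵀ * Uj := by
    ext i k
    simp [hKj, hΦ, hUj, Matrix.mul_apply, dotProduct, mul_comm]
  -- key identity
  have key : ∀ u v, Φ u v - kj v ⬝ᵥ Kj⁻¹ *ᵥ kj u = C u ⬝ᵥ C v := by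
    intro u v
    have h2 : kj v ⬝ᵥ Kj⁻¹ *ᵥ kj u = U u ⬝ᵥ M *ᵥ U v := by
      rw [hkj', hkj', hKj', Matrix.mulVec_mulVec, Matrix.mulVec_transpose,
        Matrix.dotProduct_mulVec, Matrix.vecMul_vecMul,
        ← Matrix.mul_assoc, ← hM, dotProduct_comm, Matrix.dotProduct_mulVec,
        ← Matrix.mulVec_transpose, hMsymm, ← Matrix.dotProduct_mulVec]
    have h3 : C u ⬝ᵥ C v = U u ⬝ᵥ (1 - M) *ᵥ U v := by
      rw [hC, hC, Matrix.dotProduct_mulVec, Matrix.vecMul_mulVec, h1M,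
        ← Matrix.dotProduct_mulVec]
    rw [h2, h3, hΦ, Matrix.sub_mulVec, Matrix.one_mulVec, dotProduct_sub]
  -- positivity
  have hpos : ∀ v : Fin D → ℝ, v ≠ 0 → 0 < v ⬝ᵥ v := by
    intro v hv
    have h0 : 0 ≤ v ⬝ᵥ v := Finset.sum_nonneg fun i _ => mul_self_nonneg (v i)
    exact h0.lt_of_ne fun h => hv (dotProduct_self_eq_zero.mp h.symm)
  have hnn : 0 < C xnew ⬝ᵥ C xnew := hpos _ hCnew
  have hnx : 0 < C x ⬝ᵥ C x := hpos _ hCx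
  have hen : _root_.enorm (C xnew) ^ 2 = C xnew ⬝ᵥ C xnew := Real.sq_sqrt hnn.le
  have hex : _root_.enorm (C x) ^ 2 = C x ⬝ᵥ C x := Real.sq_sqrt hnx.le
  have hnum : Φ x xnew - kj xnew ⬝ᵥ Kj⁻¹ *ᵥ kj x = C x ⬝ᵥ C xnew := key x xnew
  have hden : Φ xnew xnew - kj xnew ⬝ᵥ Kj⁻¹ *ᵥ kj xnew = C xnew ⬝ᵥ C xnew := key xnew xnew
  have hcos : (C xnew ⬝ᵥ C x / (_root_.enorm (C xnew) * _root_.enorm (C x))) ^ 2 =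
      (C x ⬝ᵥ C xnew) ^ 2 / ((C xnew ⬝ᵥ C xnew) * (C x ⬝ᵥ C x)) := by
    rw [div_pow, mul_pow, hen, hex, dotProduct_comm]
  have hiff : (Φ x xnew - kj xnew ⬝ᵥ Kj⁻¹ *ᵥ kj x) ^ 2 /
      (Φ xnew xnew - kj xnew ⬝ᵥ Kj⁻¹ *ᵥ kj xnew) ≤ δ ↔
      (C xnew ⬝ᵥ C x / (_root_.enorm (C xnew) * _root_.enorm (C x))) ^ 2 ≤ δ / _root_.enorm (C x) ^ 2 := by
    rw [hnum, hden, hcos, hex, ← div_div, div_le_div_iff_of_pos_right hnx]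
  exact ⟨hiff, fun h => mul_le_mul_of_nonneg_left (hiff.mpr h) hσ2.le⟩
end

section
/- Suppose K_j is symmetric positive definite. Then the numerator of the scaled reduction in variance obeys |Φ(x, x_{j+1}) − k_j(x_{j+1})ᵀ K_j⁻¹ k_j(x)| ≤ φ(d_min(x_{j+1})) · (1 + √j · ‖K_j⁻¹ k_j(x)‖₂). -/
open Matrix

/-- Euclidean (ℓ2) norm of a vector in ℝ^n. -/
noncomputable def enorm' {n : ℕ} (v : Fin n → ℝ) : ℝ := Real.sqrt (v ⬝ᵥ v)

lemma enorm'_nonneg {n : ℕ} (v : Fin n → ℝ) : 0 ≤ enorm' v := Real.sqrt_nonneg _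

/-- Cauchy-Schwarz for dotProduct. -/
lemma abs_dot_le {n : ℕ} (v w : Fin n → ℝ) : |v ⬝ᵥ w| ≤ enorm' v * enorm' w := by
  have h := Finset.sum_mul_sq_le_sq_mul_sq Finset.univ v w
  have hv : ∑ i, v i ^ 2 = v ⬝ᵥ v := by simp [dotProduct, sq]
  have hw : ∑ i, w i ^ 2 = w ⬝ᵥ w := by simp [dotProduct, sq]
  rw [hv, hw] at h
  have hvv : (0:ℝ) ≤ v ⬝ᵥ v := Finset.sum_nonneg fun i _ => mul_self_nonneg _
  have hww : (0:ℝ) ≤ w ⬝ᵥ w := Finset.sum_nonneg fun i _ => mul_self_nonneg _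
  have hsq : (enorm' v * enorm' w) ^ 2 = v ⬝ᵥ v * (w ⬝ᵥ w) := by
    rw [mul_pow, enorm', enorm', Real.sq_sqrt hvv, Real.sq_sqrt hww]
  rw [← hsq] at h
  have habs := abs_le_of_sq_le_sq' h (mul_nonneg (enorm'_nonneg v) (enorm'_nonneg w))
  rw [show v ⬝ᵥ w = ∑ i, v i * w i from rfl]
  exact abs_le.2 habs

/-- For a radial kernel with `φ` strictly decreasing and nonnegative, if `K_j` is
symmetric positive definite then the numerator of the reduction in variance obeys
`|Φ(x, x_{j+1}) − k_j(x_{j+1})ᵀ K_j⁻¹ k_j(x)| ≤ φ(d_min)(1 + √j ‖K_j⁻¹ k_j(x)‖₂)`. -/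
theorem numerator_bound (d j : ℕ)
    (Θ : Matrix (Fin d) (Fin d) ℝ) (φ : ℝ → ℝ)
    (hφanti : StrictAntiOn φ (Set.Ici 0))
    (hφnonneg : ∀ t, 0 ≤ t → 0 ≤ φ t)
    (Φ : (Fin d → ℝ) → (Fin d → ℝ) → ℝ)
    (hΦ : ∀ u v, Φ u v = φ (enorm' (Θ *ᵥ (u - v))))
    (x : Fin d → ℝ) (xs : Fin j → (Fin d → ℝ)) (xnew : Fin d → ℝ)
    (Kj : Matrix (Fin j) (Fin j) ℝ)
    (hKj : Kj = Matrix.of fun i k => Φ (xs i) (xs k))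
    (hKpd : Kj.PosDef)
    (kj : (Fin d → ℝ) → Fin j → ℝ)
    (hkj : ∀ u, kj u = fun i => Φ (xs i) u)
    (dmin : ℝ)
    (hdmin : IsLeast ({enorm' (Θ *ᵥ (x - xnew))} ∪
      Set.range fun i => enorm' (Θ *ᵥ (xs i - xnew))) dmin) :
    |Φ x xnew - kj xnew ⬝ᵥ Kj⁻¹ *ᵥ kj x| ≤
      φ dmin * (1 + Real.sqrt (j : ℝ) * enorm' (Kj⁻¹ *ᵥ kj x)) := by
  set w := Kj⁻¹ *ᵥ kj x with hw
  have hdmem := hdmin.1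
  have hdlb := hdmin.2
  have hdnonneg : 0 ≤ dmin := by
    rcases hdmem with h | ⟨i, hi⟩
    · rw [Set.mem_singleton_iff] at h; rw [h]; exact enorm'_nonneg _
    · rw [← hi]; exact enorm'_nonneg _
  have hM : 0 ≤ φ dmin := hφnonneg dmin hdnonneg
  -- bound on Φ x xnew
  have hΦbound : ∀ u : Fin d → ℝ, dmin ≤ enorm' (Θ *ᵥ (u - xnew)) → Φ u xnew ≤ φ dmin := by
    intro u hle
    rw [hΦ]
    rcases eq_or_lt_of_le hle with h | h
    · rw [h]
    · exact (hφanti (Set.mem_Ici.2 hdnonneg) (Set.mem_Ici.2 (enorm'_nonneg _)) h).le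
  have h1 : Φ x xnew ≤ φ dmin := hΦbound x (hdlb (Or.inl rfl))
  have h1' : 0 ≤ Φ x xnew := by rw [hΦ]; exact hφnonneg _ (enorm'_nonneg _)
  have h2 : ∀ i, |kj xnew i| ≤ φ dmin := by
    intro i
    rw [hkj]
    have hle : Φ (xs i) xnew ≤ φ dmin := hΦbound (xs i) (hdlb (Or.inr ⟨i, rfl⟩))
    have hge : 0 ≤ Φ (xs i) xnew := by rw [hΦ]; exact hφnonneg _ (enorm'_nonneg _)
    rwa [abs_of_nonneg hge]
  -- norm of kj xnew ≤ √j * φ dmin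
  have hknorm : enorm' (kj xnew) ≤ Real.sqrt (j : ℝ) * φ dmin := by
    have hdp : kj xnew ⬝ᵥ kj xnew ≤ (j : ℝ) * (φ dmin) ^ 2 := by
      have : ∀ i : Fin j, kj xnew i * kj xnew i ≤ (φ dmin) ^ 2 := by
        intro i
        have := h2 i
        nlinarith [abs_nonneg (kj xnew i), le_abs_self (kj xnew i), neg_abs_le (kj xnew i)]
      calc kj xnew ⬝ᵥ kj xnew = ∑ i, kj xnew i * kj xnew i := rfl
        _ ≤ ∑ _i : Fin j, (φ dmin) ^ 2 := Finset.sum_le_sum fun i _ => this i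
        _ = (j : ℝ) * (φ dmin) ^ 2 := by simp [mul_comm]
    have : enorm' (kj xnew) ≤ Real.sqrt ((j : ℝ) * (φ dmin) ^ 2) :=
      Real.sqrt_le_sqrt hdp
    calc enorm' (kj xnew) ≤ Real.sqrt ((j : ℝ) * (φ dmin) ^ 2) := this
      _ = Real.sqrt (j : ℝ) * φ dmin := by
          rw [Real.sqrt_mul (Nat.cast_nonneg j), Real.sqrt_sq hM]
  have hcs : |kj xnew ⬝ᵥ w| ≤ enorm' (kj xnew) * enorm' w := abs_dot_le _ _
  have hwn : 0 ≤ enorm' w := enorm'_nonneg w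
  calc |Φ x xnew - kj xnew ⬝ᵥ w| ≤ |Φ x xnew| + |kj xnew ⬝ᵥ w| := abs_sub _ _
    _ ≤ φ dmin + Real.sqrt (j : ℝ) * φ dmin * enorm' w := by
        refine add_le_add ?_ (hcs.trans (mul_le_mul_of_nonneg_right hknorm hwn))
        rwa [abs_of_nonneg h1']
    _ = φ dmin * (1 + Real.sqrt (j : ℝ) * enorm' w) := by ring
end

section
/- Suppose K_j is symmetric positive definite with minimum eigenvalue λ_min and φ(0) = 1. Then the denominator of the scaled reduction in variance is bounded below as Φ(x_{j+1}, x_{j+1}) − k_j(x_{j+1})ᵀ K_j⁻¹ k_j(x_{j+1}) ≥ 1 − j·φ(d_min(x_{j+1}))²/λ_min. -/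
open Matrix

private lemma cs_dot {n : ℕ} (a b : Fin n → ℝ) :
    (a ⬝ᵥ b) ^ 2 ≤ (a ⬝ᵥ a) * (b ⬝ᵥ b) := by
  have := real_inner_mul_inner_self_le ((WithLp.equiv 2 (Fin n → ℝ)).symm a)
    ((WithLp.equiv 2 (Fin n → ℝ)).symm b)
  simpa [dotProduct, sq] using Finset.sum_mul_sq_le_sq_mul_sq Finset.univ a b

private lemma quad_lower {n : ℕ} (K : Matrix (Fin n) (Fin n) ℝ) (hK : K.PosDef) (lam : ℝ)
    (hlam : ∀ i, lam ≤ hK.isHermitian.eigenvalues i) (v : Fin n → ℝ) :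
    lam * (v ⬝ᵥ v) ≤ v ⬝ᵥ (K *ᵥ v) := by
  have hH := hK.isHermitian
  set U : Matrix (Fin n) (Fin n) ℝ := (hH.eigenvectorUnitary : Matrix (Fin n) (Fin n) ℝ)
  have hUU : U * star U = 1 := Matrix.mem_unitaryGroup_iff.mp hH.eigenvectorUnitary.2
  have hspec := hH.spectral_theorem
  rw [Unitary.conjStarAlgAut_apply] at hspec
  have hps : (K - lam • 1).PosSemidef := by
    have hdiag : (Matrix.diagonal (RCLike.ofReal ∘ hH.eigenvalues) -
        lam • (1 : Matrix (Fin n) (Fin n) ℝ)).PosSemidef := by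
      have : Matrix.diagonal (RCLike.ofReal ∘ hH.eigenvalues) -
          lam • (1 : Matrix (Fin n) (Fin n) ℝ)
          = Matrix.diagonal (fun i => hH.eigenvalues i - lam) := by
        rw [← Matrix.diagonal_one, ← Matrix.diagonal_smul, ← Matrix.diagonal_sub]
        congr 1
        ext i
        simp [Matrix.one_apply, mul_ite, Matrix.diagonal_apply]
      rw [this]
      exact Matrix.posSemidef_diagonal_iff.mpr fun i => sub_nonneg.mpr (hlam i)
    have := hdiag.mul_mul_conjTranspose_same U
    convert this using 1
    rw [Matrix.mul_sub, Matrix.sub_mul, ← Matrix.star_eq_conjTranspose, ← hspec]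
    congr 1
    simp [Matrix.mul_smul, Matrix.smul_mul, hUU]
  have h2 := hps.dotProduct_mulVec_nonneg v
  simp only [RCLike.re_to_real, star_trivial] at h2
  rw [Matrix.sub_mulVec, dotProduct_sub, Matrix.smul_mulVec, Matrix.one_mulVec,
    dotProduct_smul, smul_eq_mul] at h2
  linarith [h2]

/-- For a radial kernel with `φ` strictly decreasing, nonnegative, `φ(0) = 1`, if
`K_j` is symmetric positive definite with minimum eigenvalue `λ_min`, then the
denominator of the reduction in variance is bounded below:
`Φ(x_{j+1},x_{j+1}) − k_j(x_{j+1})ᵀ K_j⁻¹ k_j(x_{j+1}) ≥ 1 − jφ(d_min)²/λ_min`. -/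
theorem denominator_lower_bound (d j : ℕ)
    (Θ : Matrix (Fin d) (Fin d) ℝ) (φ : ℝ → ℝ)
    (hφanti : StrictAntiOn φ (Set.Ici 0))
    (hφnonneg : ∀ t, 0 ≤ t → 0 ≤ φ t)
    (hφ0 : φ 0 = 1)
    (Φ : (Fin d → ℝ) → (Fin d → ℝ) → ℝ)
    (hΦ : ∀ u v, Φ u v = φ (enormL2 (Θ *ᵥ (u - v))))
    (x : Fin d → ℝ) (xs : Fin j → (Fin d → ℝ)) (xnew : Fin d → ℝ)
    (Kj : Matrix (Fin j) (Fin j) ℝ)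
    (hKj : Kj = Matrix.of fun i k => Φ (xs i) (xs k))
    (hKpd : Kj.PosDef)
    (kj : (Fin d → ℝ) → Fin j → ℝ)
    (hkj : ∀ u, kj u = fun i => Φ (xs i) u)
    (lammin : ℝ)
    (hlam : IsLeast (Set.range hKpd.isHermitian.eigenvalues) lammin)
    (dmin : ℝ)
    (hdmin : IsLeast ({enormL2 (Θ *ᵥ (x - xnew))} ∪
      Set.range fun i => enormL2 (Θ *ᵥ (xs i - xnew))) dmin) :
    1 - (j : ℝ) * φ dmin ^ 2 / lammin ≤
      Φ xnew xnew - kj xnew ⬝ᵥ Kj⁻¹ *ᵥ kj xnew := by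
  -- lammin is positive
  obtain ⟨i0, hi0⟩ := hlam.1
  have lampos : 0 < lammin := hi0 ▸ hKpd.eigenvalues_pos i0
  -- dmin is nonneg
  have hdnn : 0 ≤ dmin := by
    rcases hdmin.1 with h | ⟨i, hi⟩
    · rw [Set.mem_singleton_iff] at h; rw [h]; exact Real.sqrt_nonneg _
    · rw [← hi]; exact Real.sqrt_nonneg _
  -- Φ xnew xnew = 1
  have hΦself : Φ xnew xnew = 1 := by
    rw [hΦ, sub_self, Matrix.mulVec_zero]
    simp [enormL2, hφ0]
  -- entry bounds
  set k : Fin j → ℝ := kj xnew with hk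
  have hkb : ∀ i, 0 ≤ k i ∧ k i ≤ φ dmin := by
    intro i
    have hki : k i = φ (enormL2 (Θ *ᵥ (xs i - xnew))) := by rw [hk, hkj]; exact hΦ _ _
    have hnn : (0:ℝ) ≤ enormL2 (Θ *ᵥ (xs i - xnew)) := Real.sqrt_nonneg _
    have hge : dmin ≤ enormL2 (Θ *ᵥ (xs i - xnew)) := hdmin.2 (Or.inr ⟨i, rfl⟩)
    refine ⟨hki ▸ hφnonneg _ hnn, ?_⟩
    rw [hki]
    exact hφanti.antitoneOn hdnn hnn hge
  have hφdnn : 0 ≤ φ dmin := hφnonneg _ hdnn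
  -- bound on k ⬝ᵥ k
  have hkk : k ⬝ᵥ k ≤ (j : ℝ) * φ dmin ^ 2 := by
    calc k ⬝ᵥ k = ∑ i, k i * k i := rfl
      _ ≤ ∑ _i : Fin j, φ dmin ^ 2 := by
          refine Finset.sum_le_sum fun i _ => ?_
          have := hkb i
          nlinarith [this.1, this.2]
      _ = (j : ℝ) * φ dmin ^ 2 := by
          rw [Finset.sum_const, Finset.card_univ, Fintype.card_fin, nsmul_eq_mul]
  have hkknn : 0 ≤ k ⬝ᵥ k := Finset.sum_nonneg fun i _ => mul_self_nonneg _
  -- w := K⁻¹ k, and K w = k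
  set w : Fin j → ℝ := Kj⁻¹ *ᵥ k with hw
  have hdet : IsUnit Kj.det := isUnit_iff_ne_zero.mpr (ne_of_gt hKpd.det_pos)
  have hKw : Kj *ᵥ w = k := by
    rw [hw, Matrix.mulVec_mulVec, Matrix.mul_nonsing_inv _ hdet, Matrix.one_mulVec]
  -- lower bound on quadratic form
  have hq : lammin * (w ⬝ᵥ w) ≤ w ⬝ᵥ k := by
    have := quad_lower Kj hKpd lammin (fun i => hlam.2 ⟨i, rfl⟩) w
    rwa [hKw] at this
  have hwknn : 0 ≤ w ⬝ᵥ w := Finset.sum_nonneg fun i _ => mul_self_nonneg _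
  have hcs : (k ⬝ᵥ w) ^ 2 ≤ (k ⬝ᵥ k) * (w ⬝ᵥ w) := cs_dot k w
  have hcomm : w ⬝ᵥ k = k ⬝ᵥ w := dotProduct_comm w k
  rw [hcomm] at hq
  set t : ℝ := k ⬝ᵥ w with ht
  -- t * lammin ≤ k ⬝ᵥ k
  have hmain : t * lammin ≤ k ⬝ᵥ k := by
    rcases le_or_gt t 0 with h | h
    · have : t * lammin ≤ 0 := mul_nonpos_of_nonpos_of_nonneg h (le_of_lt lampos)
      linarith
    · nlinarith [hcs, hq, hwknn]
  have hfinal : t ≤ (j : ℝ) * φ dmin ^ 2 / lammin := by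
    rw [le_div_iff₀ lampos]
    linarith
  rw [hΦself]
  linarith
end

section
/- Let j ≥ 1, let δ > 0, and suppose K_j is symmetric positive definite with maximum eigenvalue λ_max. If φ(d_max(x_{j+1}))² ≥ λ_max · δ (equivalently, since φ is strictly decreasing, d_max(x_{j+1}) ≤ φ⁻¹(√(λ_max δ))), then the sequential maximum entropy objective satisfies k_j(x_{j+1})ᵀ K_j⁻¹ k_j(x_{j+1}) ≥ j·δ ≥ δ. Hence candidate points whose maximum distance from the current design exceeds φ⁻¹(√(λ_max δ)) are the only ones that can achieve an objective value below δ. -/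
open Matrix
open scoped MatrixOrder

/-- Euclidean (ℓ2) norm of a vector in ℝ^n. -/
noncomputable def enorm₂ {n : ℕ} (v : Fin n → ℝ) : ℝ := Real.sqrt (v ⬝ᵥ v)

lemma cs_psd {n : Type*} [Fintype n] [DecidableEq n] {B : Matrix n n ℝ} (hB : B.PosSemidef)
    (u v : n → ℝ) :
    (u ⬝ᵥ B *ᵥ v) ^ 2 ≤ (u ⬝ᵥ B *ᵥ u) * (v ⬝ᵥ B *ᵥ v) := by
  obtain ⟨C, rfl⟩ := CStarAlgebra.nonneg_iff_eq_star_mul_self.mp hB.nonneg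
  rw [Matrix.star_eq_conjTranspose]
  have key : ∀ a b : n → ℝ, a ⬝ᵥ (Cᴴ * C) *ᵥ b = (C *ᵥ a) ⬝ᵥ (C *ᵥ b) := by
    intro a b
    rw [← mulVec_mulVec, Matrix.dotProduct_mulVec, conjTranspose_eq_transpose_of_trivial,
      Matrix.vecMul_transpose]
  rw [key, key, key]
  have := Finset.sum_mul_sq_le_sq_mul_sq Finset.univ (C *ᵥ u) (C *ᵥ v)
  simpa [dotProduct, sq, Finset.mul_sum, mul_pow] using this

lemma rayleigh_ub {n : Type*} [Fintype n] [DecidableEq n] {A : Matrix n n ℝ}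
    (hA : A.IsHermitian) (lam : ℝ) (hub : ∀ i, hA.eigenvalues i ≤ lam) (x : n → ℝ) :
    x ⬝ᵥ A *ᵥ x ≤ lam * (x ⬝ᵥ x) := by
  set U : Matrix n n ℝ := (hA.eigenvectorUnitary : Matrix n n ℝ) with hU
  have hUU : U * star U = 1 := (Matrix.mem_unitaryGroup_iff).mp hA.eigenvectorUnitary.2
  set y := x ᵥ* U with hy
  have hyy : star U *ᵥ x = y := by
    rw [hy, Matrix.star_eq_conjTranspose, conjTranspose_eq_transpose_of_trivial,
      Matrix.mulVec_transpose]
  have lhs_eq : x ⬝ᵥ A *ᵥ x = ∑ i, hA.eigenvalues i * (y i * y i) := by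
    conv_lhs => rw [hA.spectral_theorem, Unitary.conjStarAlgAut_apply]
    rw [← mulVec_mulVec, ← mulVec_mulVec, Matrix.dotProduct_mulVec, hyy]
    simp [dotProduct, Matrix.mulVec_diagonal, mul_comm, mul_left_comm]
    rfl
  have ynorm : y ⬝ᵥ y = x ⬝ᵥ x := by
    have : y ⬝ᵥ (star U *ᵥ x) = (y ᵥ* star U) ⬝ᵥ x := Matrix.dotProduct_mulVec _ _ _
    rw [hyy] at this
    rw [this, hy, Matrix.vecMul_vecMul, hUU, Matrix.vecMul_one]
  calc x ⬝ᵥ A *ᵥ x = ∑ i, hA.eigenvalues i * (y i * y i) := lhs_eq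
    _ ≤ ∑ i, lam * (y i * y i) := by
        refine Finset.sum_le_sum fun i _ => ?_
        exact mul_le_mul_of_nonneg_right (hub i) (mul_self_nonneg _)
    _ = lam * (y ⬝ᵥ y) := by rw [dotProduct, Finset.mul_sum]
    _ = lam * (x ⬝ᵥ x) := by rw [ynorm]

/-- **Maximum entropy design search reduction.** For `j ≥ 1`, `δ > 0`, `K_j`
symmetric positive definite with maximum eigenvalue `λ_max`, if
`φ(d_max(x_{j+1}))² ≥ λ_max · δ`, then the sequential maximum entropy objective
satisfies `k_j(x_{j+1})ᵀ K_j⁻¹ k_j(x_{j+1}) ≥ jδ ≥ δ`. -/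
theorem max_entropy_objective_lower_bound (d j : ℕ) (hj : 1 ≤ j)
    (Θ : Matrix (Fin d) (Fin d) ℝ) (φ : ℝ → ℝ)
    (hφanti : StrictAntiOn φ (Set.Ici 0))
    (hφnonneg : ∀ t, 0 ≤ t → 0 ≤ φ t)
    (Φ : (Fin d → ℝ) → (Fin d → ℝ) → ℝ)
    (hΦ : ∀ u v, Φ u v = φ (enorm₂ (Θ *ᵥ (u - v))))
    (xs : Fin j → (Fin d → ℝ)) (xnew : Fin d → ℝ)
    (Kj : Matrix (Fin j) (Fin j) ℝ)
    (hKj : Kj = Matrix.of fun i k => Φ (xs i) (xs k))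
    (hKpd : Kj.PosDef)
    (kj : (Fin d → ℝ) → Fin j → ℝ)
    (hkj : ∀ u, kj u = fun i => Φ (xs i) u)
    (lammax : ℝ)
    (hlam : IsGreatest (Set.range hKpd.isHermitian.eigenvalues) lammax)
    (dmax : ℝ)
    (hdmax : IsGreatest (Set.range fun i => enorm₂ (Θ *ᵥ (xs i - xnew))) dmax)
    (δ : ℝ) (hδ : 0 < δ)
    (hcond : lammax * δ ≤ φ dmax ^ 2) :
    δ ≤ (j : ℝ) * δ ∧ (j : ℝ) * δ ≤ kj xnew ⬝ᵥ Kj⁻¹ *ᵥ kj xnew := by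
  have hj1 : (1 : ℝ) ≤ (j : ℝ) := by exact_mod_cast hj
  refine ⟨le_mul_of_one_le_left hδ.le hj1, ?_⟩
  set x := kj xnew with hx
  -- positivity of lammax
  have hlampos : 0 < lammax := by
    obtain ⟨i, hi⟩ := hlam.1
    rw [← hi]; exact hKpd.eigenvalues_pos i
  -- dmax is nonneg
  have hdm0 : 0 ≤ dmax := by
    obtain ⟨i, hi⟩ := hdmax.1
    rw [← hi]; exact Real.sqrt_nonneg _
  -- entrywise lower bound
  have hentry : ∀ i, φ dmax ≤ x i := by
    intro i
    have hd : enorm₂ (Θ *ᵥ (xs i - xnew)) ≤ dmax := hdmax.2 (Set.mem_range_self i)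
    have h0 : (0:ℝ) ≤ enorm₂ (Θ *ᵥ (xs i - xnew)) := Real.sqrt_nonneg _
    have := hφanti.antitoneOn h0 hdm0 hd
    show φ dmax ≤ kj xnew i
    rw [hkj]
    simpa [hΦ] using this
  have hφd0 : 0 ≤ φ dmax := hφnonneg dmax hdm0
  -- lower bound on x ⬝ᵥ x
  have hS_lb : (j : ℝ) * (φ dmax ^ 2) ≤ x ⬝ᵥ x := by
    have : ∑ _i : Fin j, φ dmax ^ 2 ≤ ∑ i, x i * x i := by
      refine Finset.sum_le_sum fun i _ => ?_
      calc φ dmax ^ 2 = φ dmax * φ dmax := by ring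
        _ ≤ x i * x i := mul_le_mul (hentry i) (hentry i) hφd0 (hφd0.trans (hentry i))
    simpa [dotProduct, Finset.sum_const, nsmul_eq_mul] using this
  have hS_lb' : lammax * ((j : ℝ) * δ) ≤ x ⬝ᵥ x := by
    have h1 : lammax * ((j : ℝ) * δ) ≤ (j : ℝ) * (φ dmax ^ 2) := by
      have := mul_le_mul_of_nonneg_left hcond (by positivity : (0:ℝ) ≤ (j:ℝ))
      nlinarith
    linarith
  -- inverse facts
  have hdet : IsUnit Kj.det := isUnit_iff_ne_zero.mpr hKpd.det_pos.ne'
  have hKinv : (Kj⁻¹).PosDef := hKpd.inv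
  have e1 : x ⬝ᵥ Kj⁻¹ *ᵥ (Kj *ᵥ x) = x ⬝ᵥ x := by
    rw [mulVec_mulVec, Matrix.nonsing_inv_mul _ hdet, Matrix.one_mulVec]
  have e2 : (Kj *ᵥ x) ⬝ᵥ Kj⁻¹ *ᵥ (Kj *ᵥ x) = x ⬝ᵥ Kj *ᵥ x := by
    rw [mulVec_mulVec, Matrix.nonsing_inv_mul _ hdet, Matrix.one_mulVec,
      dotProduct_comm]
  have hcs := cs_psd hKinv.posSemidef x (Kj *ᵥ x)
  rw [e1, e2] at hcs
  -- Rayleigh bound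
  have hub : ∀ i, hKpd.isHermitian.eigenvalues i ≤ lammax := fun i =>
    hlam.2 (Set.mem_range_self i)
  have hray : x ⬝ᵥ Kj *ᵥ x ≤ lammax * (x ⬝ᵥ x) := rayleigh_ub hKpd.isHermitian lammax hub x
  -- nonnegativity of the objective
  have hQ0 : 0 ≤ x ⬝ᵥ Kj⁻¹ *ᵥ x := by
    have := hKinv.posSemidef.re_dotProduct_nonneg x
    simpa using this
  -- combine
  have hSpos : 0 < x ⬝ᵥ x := lt_of_lt_of_le (by positivity) hS_lb'
  set Q := x ⬝ᵥ Kj⁻¹ *ᵥ x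
  set S := x ⬝ᵥ x
  have key : (S : ℝ) ^ 2 ≤ Q * (lammax * S) :=
    hcs.trans (mul_le_mul_of_nonneg_left hray hQ0)
  have hS_le : S ≤ lammax * Q := by
    have h := key
    nlinarith [hSpos, sq_nonneg S]
  have : lammax * ((j : ℝ) * δ) ≤ lammax * Q := hS_lb'.trans hS_le
  exact le_of_mul_le_mul_left this hlampos
end
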